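/- For any real a, with θ(a) = (2 + a - √(4 + a²))/(2a) for a ≠ 0 and θ(0) = 1/2, it holds that 1/θ(a)² + 1/(1-θ(a))² ≥ a² + 2|a|, and in particular ≥ a². -/

import Mathlib

open Real

/-! With `s = √(4 + a²)` one has `(s + a)(s - a) = 4`, so rationalizing gives
`1/θ = (2 + s + a)/2` and `1/(1 - θ) = (2 + s - a)/2`.  Hence
`1/θ² + 1/(1 - θ)² = a² + 2s + 4`, and the bound follows from `|a| ≤ s`. -/

noncomputable def barrierUpdate (a : ℝ) : ℝ :=
  if a = 0 then 1 / 2 else (2 + a - √(4 + a ^ 2)) / (2 * a)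

lemma sq_sqrt_four_add_sq (a : ℝ) : √(4 + a ^ 2) ^ 2 = 4 + a ^ 2 :=
  sq_sqrt (by positivity)

lemma abs_lt_sqrt_four_add_sq (a : ℝ) : |a| < √(4 + a ^ 2) :=
  (lt_sqrt (abs_nonneg a)).2 (by rw [sq_abs]; linarith)

lemma sqrt_four_add_sq_add_pos (a : ℝ) : 0 < √(4 + a ^ 2) + a := by
  linarith [neg_abs_le a, abs_lt_sqrt_four_add_sq a]

lemma barrierUpdate_eq_two_div (a : ℝ) : barrierUpdate a = 2 / (2 + √(4 + a ^ 2) + a) := by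
  have hpos := sqrt_four_add_sq_add_pos a
  unfold barrierUpdate
  split_ifs with ha
  · subst ha
    rw [show (4 : ℝ) + 0 ^ 2 = 2 ^ 2 by norm_num, sqrt_sq zero_le_two]
    norm_num
  · rw [div_eq_div_iff (mul_ne_zero two_ne_zero ha) (by linarith)]
    linear_combination -sq_sqrt_four_add_sq a

lemma one_div_barrierUpdate (a : ℝ) : 1 / barrierUpdate a = (2 + √(4 + a ^ 2) + a) / 2 := by
  rw [barrierUpdate_eq_two_div, one_div_div]

lemma one_div_one_sub_barrierUpdate (a : ℝ) :
    1 / (1 - barrierUpdate a) = (2 + √(4 + a ^ 2) - a) / 2 := by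
  have hpos := sqrt_four_add_sq_add_pos a
  have hden : 2 + √(4 + a ^ 2) + a ≠ 0 := by linarith
  rw [barrierUpdate_eq_two_div, one_sub_div hden, one_div_div,
    div_eq_div_iff (by linarith) two_ne_zero]
  linear_combination -sq_sqrt_four_add_sq a

lemma barrierUpdate_hessian_eq (a : ℝ) :
    1 / barrierUpdate a ^ 2 + 1 / (1 - barrierUpdate a) ^ 2 = a ^ 2 + 2 * √(4 + a ^ 2) + 4 := by
  rw [← one_div_pow, ← one_div_pow, one_div_barrierUpdate, one_div_one_sub_barrierUpdate]
  linear_combination (1 / 2 : ℝ) * sq_sqrt_four_add_sq a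

theorem barrier_hessian_lower_bound_one_sided (a : ℝ) :
    let θ : ℝ := if a = 0 then 1 / 2 else (2 + a - Real.sqrt (4 + a ^ 2)) / (2 * a)
    a ^ 2 + 2 * |a| ≤ 1 / θ ^ 2 + 1 / (1 - θ) ^ 2 ∧
    a ^ 2 ≤ 1 / θ ^ 2 + 1 / (1 - θ) ^ 2 := by
  change a ^ 2 + 2 * |a| ≤ 1 / barrierUpdate a ^ 2 + 1 / (1 - barrierUpdate a) ^ 2 ∧
    a ^ 2 ≤ 1 / barrierUpdate a ^ 2 + 1 / (1 - barrierUpdate a) ^ 2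
  rw [barrierUpdate_hessian_eq]
  have := abs_lt_sqrt_four_add_sq a
  constructor <;> linarith [abs_nonneg a]
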